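/- For probability distributions μ, π on a finite alphabet with full support, inf_p [D(μ‖p) + m·D(π‖p)] (infimum over full-support probability distributions p) converges to D(μ‖π) as m → ∞. In particular, the infimum is bounded above by D(μ‖π) for every m, and for every ε > 0 there exists M such that for all m ≥ M the infimum exceeds D(μ‖π) − ε. -/

import Mathlib

open Finset
open scoped Classical

/-- `p` is a probability mass function on the finite alphabet `Y`. -/
def IsPMF {Y : Type*} [Fintype Y] (p : Y → ℝ) : Prop :=
  (∀ y, 0 ≤ p y) ∧ ∑ y, p y = 1

/-- Relative entropy (KL divergence), with the convention `0 log 0 = 0`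
(automatic since `0 * log _ = 0` in `ℝ`). -/
noncomputable def KL {Y : Type*} [Fintype Y] (p q : Y → ℝ) : ℝ :=
  ∑ y, p y * Real.log (p y / q y)

/-! For `t > 0` the mixture `q = (μ + t π) / (1 + t)` satisfies the compensation identity
`KL μ p + t KL π p = KL μ q + t KL π q + (1 + t) KL q p`, so by Gibbs' inequality every value of the
penalized objective is at least `KL μ q`, while `p = π` gives the value `KL μ π`. As `t → ∞` the
mixture tends to `π`, and `KL μ` is continuous at the full-support point `π`, so the two bounds
squeeze the infimum to `KL μ π`. -/

open Filter Topology InformationTheory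
open Real (log log_div continuousAt_log)

lemma sub_le_mul_log_div {a b : ℝ} (ha : 0 ≤ a) (hb : 0 < b) : a - b ≤ a * log (a / b) := by
  have hklFun : 0 ≤ b * klFun (a / b) := mul_nonneg hb.le (klFun_nonneg (div_nonneg ha hb.le))
  rw [klFun_apply] at hklFun
  field_simp at hklFun
  linarith

lemma mul_log_div_eq_add (a : ℝ) {b c : ℝ} (hb : b ≠ 0) (hc : c ≠ 0) :
    a * log (a / c) = a * log (a / b) + a * log (b / c) := by
  rcases eq_or_ne a 0 with rfl | ha
  · simp
  · rw [log_div ha hc, log_div ha hb, log_div hb hc]; ring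

section

variable {Y : Type*}

noncomputable def mixture (μ π : Y → ℝ) (t : ℝ) : Y → ℝ := fun y => (μ y + t * π y) / (1 + t)

section mixture

variable {μ π : Y → ℝ} {t : ℝ}

lemma one_add_mul_mixture (ht : 1 + t ≠ 0) (y : Y) :
    (1 + t) * mixture μ π t y = μ y + t * π y :=
  mul_div_cancel₀ _ ht

lemma mixture_pos (hμ : ∀ y, 0 ≤ μ y) (hπ : ∀ y, 0 < π y) (ht : 0 < t) (y : Y) :
    0 < mixture μ π t y := by
  have := hμ y; have := hπ y
  unfold mixture; positivity

lemma tendsto_mixture_atTop : Tendsto (mixture μ π) atTop (𝓝 π) := by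
  refine tendsto_pi_nhds.2 fun y => ?_
  have hvanish : Tendsto (fun t : ℝ => (μ y - π y) / (1 + t)) atTop (𝓝 0) :=
    tendsto_const_nhds.div_atTop (tendsto_atTop_add_const_left _ 1 tendsto_id)
  refine (by simpa using tendsto_const_nhds.add hvanish :
    Tendsto (fun t : ℝ => π y + (μ y - π y) / (1 + t)) atTop (𝓝 (π y))).congr' ?_
  filter_upwards [eventually_ge_atTop 0] with t ht
  simp only [mixture]
  field_simp
  ring

variable [Fintype Y]

lemma isPMF_mixture (hμ : IsPMF μ) (hπ : IsPMF π) (ht : 0 ≤ t) : IsPMF (mixture μ π t) := by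
  refine ⟨fun y => ?_, ?_⟩
  · have := hμ.1 y; have := hπ.1 y
    unfold mixture; positivity
  · simp only [mixture]
    rw [← sum_div, sum_add_distrib, ← mul_sum, hμ.2, hπ.2, mul_one, div_self (by positivity)]

end mixture

variable [Fintype Y]

@[simp]
lemma KL_self (p : Y → ℝ) : KL p p = 0 := by
  refine sum_eq_zero fun y _ => ?_
  rcases eq_or_ne (p y) 0 with h | h <;> simp [h]

lemma KL_nonneg {p q : Y → ℝ} (hp : IsPMF p) (hq : IsPMF q) (hq_pos : ∀ y, 0 < q y) :
    0 ≤ KL p q := by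
  calc (0 : ℝ) = ∑ y, (p y - q y) := by rw [sum_sub_distrib, hp.2, hq.2, sub_self]
    _ ≤ KL p q := sum_le_sum fun y _ => sub_le_mul_log_div (hp.1 y) (hq_pos y)

lemma continuousAt_KL {μ q : Y → ℝ} (hq : ∀ y, q y ≠ 0) : ContinuousAt (KL μ) q := by
  refine tendsto_finsetSum _ fun y _ => ?_
  rcases eq_or_ne (μ y) 0 with h | h
  · simp only [h, zero_mul]; exact continuousAt_const
  · show ContinuousAt (fun q : Y → ℝ => μ y * log (μ y / q y)) q
    exact continuousAt_const.mul <| (continuousAt_log (div_ne_zero h (hq y))).comp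
      (f := fun q : Y → ℝ => μ y / q y) <|
      continuousAt_const.div (continuous_apply y).continuousAt (hq y)

lemma KL_add_mul_KL_eq {μ π p q : Y → ℝ} {t : ℝ} (hq : ∀ y, (1 + t) * q y = μ y + t * π y)
    (hq0 : ∀ y, q y ≠ 0) (hp0 : ∀ y, p y ≠ 0) :
    KL μ p + t * KL π p = KL μ q + t * KL π q + (1 + t) * KL q p := by
  simp only [KL, mul_sum, ← sum_add_distrib]
  refine sum_congr rfl fun y _ => ?_
  rw [mul_log_div_eq_add (μ y) (hq0 y) (hp0 y), mul_log_div_eq_add (π y) (hq0 y) (hp0 y)]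
  linear_combination (-log (q y / p y)) * hq y

section penalized

variable {μ π : Y → ℝ} {t : ℝ}

lemma KL_mixture_le (hμ : IsPMF μ) (hπ : IsPMF π) (hπ_pos : ∀ y, 0 < π y) (ht : 0 < t)
    {p : Y → ℝ} (hp : IsPMF p) (hp_pos : ∀ y, 0 < p y) :
    KL μ (mixture μ π t) ≤ KL μ p + t * KL π p := by
  have hq_pos := mixture_pos hμ.1 hπ_pos ht
  rw [KL_add_mul_KL_eq (one_add_mul_mixture (by positivity)) (fun y => (hq_pos y).ne')
    (fun y => (hp_pos y).ne')]
  have hq := isPMF_mixture hμ hπ ht.le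
  have hπq := mul_nonneg ht.le (KL_nonneg hπ hq hq_pos)
  have hqp := mul_nonneg (by positivity : (0 : ℝ) ≤ 1 + t) (KL_nonneg hq hp hp_pos)
  linarith

def penalizedKLValues (μ π : Y → ℝ) (t : ℝ) : Set ℝ :=
  {x | ∃ p : Y → ℝ, IsPMF p ∧ (∀ y, 0 < p y) ∧ x = KL μ p + t * KL π p}

lemma KL_mem_penalizedKLValues (hπ : IsPMF π) (hπ_pos : ∀ y, 0 < π y) :
    KL μ π ∈ penalizedKLValues μ π t :=
  ⟨π, hπ, hπ_pos, by simp⟩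

lemma sInf_penalizedKLValues_le_KL (hμ : IsPMF μ) (hπ : IsPMF π) (hπ_pos : ∀ y, 0 < π y)
    (ht : 0 ≤ t) : sInf (penalizedKLValues μ π t) ≤ KL μ π := by
  refine csInf_le ⟨0, ?_⟩ (KL_mem_penalizedKLValues hπ hπ_pos)
  rintro _ ⟨p, hp, hp_pos, rfl⟩
  have := KL_nonneg hμ hp hp_pos
  have := KL_nonneg hπ hp hp_pos
  positivity

lemma KL_mixture_le_sInf_penalizedKLValues (hμ : IsPMF μ) (hπ : IsPMF π)
    (hπ_pos : ∀ y, 0 < π y) (ht : 0 < t) :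
    KL μ (mixture μ π t) ≤ sInf (penalizedKLValues μ π t) := by
  refine le_csInf ⟨_, KL_mem_penalizedKLValues hπ hπ_pos⟩ ?_
  rintro _ ⟨p, hp, hp_pos, rfl⟩
  exact KL_mixture_le hμ hπ hπ_pos ht hp hp_pos

end penalized

end

theorem etaBar_tendsto_KL_general {Y : Type*} [Fintype Y] (μ π : Y → ℝ)
    (hμ : IsPMF μ) (hπ : IsPMF π) (hπpos : ∀ y, 0 < π y) :
    (∀ m : ℕ, sInf {x : ℝ | ∃ p : Y → ℝ, IsPMF p ∧ (∀ y, 0 < p y) ∧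
        x = KL μ p + (m : ℝ) * KL π p} ≤ KL μ π) ∧
    (∀ ε > (0 : ℝ), ∃ M : ℕ, ∀ m ≥ M,
      KL μ π - ε < sInf {x : ℝ | ∃ p : Y → ℝ, IsPMF p ∧ (∀ y, 0 < p y) ∧
        x = KL μ p + (m : ℝ) * KL π p}) ∧
    Filter.Tendsto (fun m : ℕ => sInf {x : ℝ | ∃ p : Y → ℝ, IsPMF p ∧ (∀ y, 0 < p y) ∧
        x = KL μ p + (m : ℝ) * KL π p}) Filter.atTop (nhds (KL μ π)) := by
  have hupper (m : ℕ) : sInf (penalizedKLValues μ π m) ≤ KL μ π :=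
    sInf_penalizedKLValues_le_KL hμ hπ hπpos m.cast_nonneg
  have hlower : ∀ᶠ m : ℕ in atTop, KL μ (mixture μ π m) ≤ sInf (penalizedKLValues μ π m) :=
    (eventually_gt_atTop 0).mono fun m hm =>
      KL_mixture_le_sInf_penalizedKLValues hμ hπ hπpos (Nat.cast_pos.2 hm)
  have hmixture : Tendsto (fun m : ℕ => KL μ (mixture μ π m)) atTop (𝓝 (KL μ π)) :=
    ((continuousAt_KL fun y => (hπpos y).ne').tendsto.comp tendsto_mixture_atTop).comp
      tendsto_natCast_atTop_atTop
  have htendsto : Tendsto (fun m : ℕ => sInf (penalizedKLValues μ π m)) atTop (𝓝 (KL μ π)) :=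
    tendsto_of_tendsto_of_tendsto_of_le_of_le' hmixture tendsto_const_nhds hlower
      (Eventually.of_forall hupper)
  exact ⟨hupper,
    fun ε hε => eventually_atTop.1 (htendsto.eventually (lt_mem_nhds (sub_lt_self _ hε))),
    htendsto⟩

theorem etaBar_tendsto_KL {Y : Type*} [Fintype Y] (μ π : Y → ℝ)
    (hμ : IsPMF μ) (hπ : IsPMF π) (hμpos : ∀ y, 0 < μ y) (hπpos : ∀ y, 0 < π y) :
    (∀ m : ℕ, sInf {x : ℝ | ∃ p : Y → ℝ, IsPMF p ∧ (∀ y, 0 < p y) ∧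
        x = KL μ p + (m : ℝ) * KL π p} ≤ KL μ π) ∧
    (∀ ε > (0 : ℝ), ∃ M : ℕ, ∀ m ≥ M,
      KL μ π - ε < sInf {x : ℝ | ∃ p : Y → ℝ, IsPMF p ∧ (∀ y, 0 < p y) ∧
        x = KL μ p + (m : ℝ) * KL π p}) ∧
    Filter.Tendsto (fun m : ℕ => sInf {x : ℝ | ∃ p : Y → ℝ, IsPMF p ∧ (∀ y, 0 < p y) ∧
        x = KL μ p + (m : ℝ) * KL π p}) Filter.atTop (nhds (KL μ π)) :=
  etaBar_tendsto_KL_general μ π hμ hπ hπpos
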